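/- arXiv:2302.13791 — 6 statements merged into one kernel-verified Lean document; each statement's English description precedes it below -/
import Mathlib

section
/- Let F₀ be a real number with 1/2 < F₀ < 1 and define the purification fidelity sequence by F_n = F_{n-1}² / (F_{n-1}² + (1 - F_{n-1})²) for n ≥ 1. Then F_n tends to 1 as n tends to infinity. -/
open Filter

/-! The odds ratio `r = (1 - F) / F` is squared by each purification step, so
`r_n = r_0 ^ 2 ^ n`. Since `F_0 > 1/2` gives `|r_0| < 1`, `r_n → 0` and hence
`F_n = 1 / (1 + r_n) → 1`. -/

noncomputable def purify (x : ℝ) : ℝ := x ^ 2 / (x ^ 2 + (1 - x) ^ 2)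

lemma purify_pos {x : ℝ} (hx : 0 < x) : 0 < purify x := by
  unfold purify; positivity

lemma one_sub_purify_div_purify {x : ℝ} (hx : 0 < x) :
    (1 - purify x) / purify x = ((1 - x) / x) ^ 2 := by
  have hden : 0 < x ^ 2 + (1 - x) ^ 2 := by positivity
  unfold purify
  field_simp
  ring

lemma eq_inv_one_add_one_sub_div {x : ℝ} (hx : x ≠ 0) : x = (1 + (1 - x) / x)⁻¹ := by
  field_simp
  ring

lemma abs_one_sub_div_lt_one {x : ℝ} (hx : 1 / 2 < x) : |(1 - x) / x| < 1 := by
  have hx0 : 0 < x := by linarith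
  rw [abs_div, abs_of_pos hx0, div_lt_one hx0, abs_lt]
  constructor <;> linarith

lemma tendsto_pow_two_pow_nhds_zero {r : ℝ} (hr : |r| < 1) :
    Tendsto (fun n : ℕ => r ^ 2 ^ n) atTop (nhds 0) :=
  (tendsto_pow_atTop_nhds_zero_of_abs_lt_one hr).comp
    (tendsto_pow_atTop_atTop_of_one_lt one_lt_two)

theorem purification_tendsto_one_general (F : ℕ → ℝ)
    (h0 : 1 / 2 < F 0)
    (hrec : ∀ n : ℕ, F (n + 1) = (F n) ^ 2 / ((F n) ^ 2 + (1 - F n) ^ 2)) :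
    Tendsto F atTop (nhds 1) := by
  have hstep : ∀ n, F (n + 1) = purify (F n) := hrec
  have hpos : ∀ n, 0 < F n := by
    intro n
    induction n with
    | zero => linarith
    | succ n ih => rw [hstep]; exact purify_pos ih
  have hodds : ∀ n, (1 - F n) / F n = ((1 - F 0) / F 0) ^ 2 ^ n := by
    intro n
    induction n with
    | zero => simp
    | succ n ih => rw [hstep, one_sub_purify_div_purify (hpos n), ih, ← pow_mul, ← pow_succ]
  have hF : F = fun n => (1 + ((1 - F 0) / F 0) ^ 2 ^ n)⁻¹ := by
    funext n
    rw [← hodds n]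
    exact eq_inv_one_add_one_sub_div (hpos n).ne'
  have hlim := ((tendsto_pow_two_pow_nhds_zero (abs_one_sub_div_lt_one h0)).const_add 1).inv₀
  rw [hF]
  simpa using hlim

/-- The purification fidelity sequence starting from `F 0` with `1/2 < F 0 < 1`
tends to `1`. -/
theorem purification_tendsto_one (F : ℕ → ℝ)
    (h0 : 1 / 2 < F 0) (h1 : F 0 < 1)
    (hrec : ∀ n : ℕ, F (n + 1) = (F n) ^ 2 / ((F n) ^ 2 + (1 - F n) ^ 2)) :
    Tendsto F atTop (nhds 1) :=
  purification_tendsto_one_general F h0 hrec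
end

section
/- If F is a real number with 1/2 < F < 1/√2 and F' = F² / (F² + (1 - F)²), then F'/F > 1/2 + F. -/
/-- If `1/2 < F < 1/√2` and `F'` is the result of one purification step applied
to `F`, then `F'/F > 1/2 + F`. -/
theorem purification_ratio_bound (F F' : ℝ)
    (h0 : 1 / 2 < F) (h1 : F < 1 / Real.sqrt 2)
    (hF' : F' = F ^ 2 / (F ^ 2 + (1 - F) ^ 2)) :
    F' / F > 1 / 2 + F := by
  subst hF'
  have hF0 : 0 < F := by linarith
  have hs : (0:ℝ) < Real.sqrt 2 := Real.sqrt_pos.mpr (by norm_num)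
  have hsq : Real.sqrt 2 ^ 2 = 2 := Real.sq_sqrt (by norm_num)
  have h2 : F ^ 2 < 1 / 2 := by
    have : F * Real.sqrt 2 < 1 := (lt_div_iff₀ hs).mp h1
    nlinarith
  have hD : 0 < F ^ 2 + (1 - F) ^ 2 := by nlinarith
  rw [gt_iff_lt, div_div, lt_div_iff₀ (by positivity)]
  nlinarith [mul_pos (sub_pos.mpr h0) (sub_pos.mpr h2)]
end

section
/- Let F₀ be a real number with 1/2 < F₀ < 1/√2 and define the purification fidelity sequence by F_n = F_{n-1}² / (F_{n-1}² + (1 - F_{n-1})²) for n ≥ 1. For every natural number n, if F_n < 1/√2 then F_n ≥ (F₀ + 1/2)ⁿ · F₀. -/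
/-- Growth bound for the purification fidelity sequence: as long as the
fidelity stays below `1/√2`, it grows at least geometrically with ratio
`F 0 + 1/2`. -/
theorem purification_growth_bound (F : ℕ → ℝ)
    (h0 : 1 / 2 < F 0) (h1 : F 0 < 1 / Real.sqrt 2)
    (hrec : ∀ n : ℕ, F (n + 1) = (F n) ^ 2 / ((F n) ^ 2 + (1 - F n) ^ 2)) :
    ∀ n : ℕ, F n < 1 / Real.sqrt 2 → F n ≥ (F 0 + 1 / 2) ^ n * F 0 := by
  have hs0 : (0:ℝ) < Real.sqrt 2 := by positivity
  have hs2 : Real.sqrt 2 ^ 2 = 2 := Real.sq_sqrt (by norm_num)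
  have hinv : ∀ n, 1/2 < F n ∧ F n < 1 := by
    intro n
    induction n with
    | zero =>
      refine ⟨h0, ?_⟩
      have : 1 / Real.sqrt 2 < 1 := by
        rw [div_lt_one hs0]; nlinarith
      linarith
    | succ n ih =>
      obtain ⟨hl, hu⟩ := ih
      have hd : 0 < (F n)^2 + (1 - F n)^2 := by nlinarith
      constructor
      · rw [hrec n, lt_div_iff₀ hd]; nlinarith
      · rw [hrec n, div_lt_one hd]; nlinarith
  intro n
  induction n with
  | zero => intro _; simp
  | succ n ih =>
    intro hlt
    obtain ⟨hl, hu⟩ := hinv n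
    have hd : 0 < (F n)^2 + (1 - F n)^2 := by nlinarith
    have hmono : F n ≤ F (n+1) := by
      rw [hrec n, le_div_iff₀ hd]
      nlinarith [mul_pos (mul_pos (by linarith : (0:ℝ) < F n)
        (by linarith : (0:ℝ) < 2 * F n - 1)) (by linarith : (0:ℝ) < 1 - F n)]
    have hnlt : F n < 1 / Real.sqrt 2 := lt_of_le_of_lt hmono hlt
    have hIH := ih hnlt
    have h2 : 2 * (F n)^2 < 1 := by
      have : F n * Real.sqrt 2 < 1 := by
        rw [lt_div_iff₀ hs0] at hnlt; linarith
      nlinarith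
    have hkey : (F n + 1/2) * F n ≤ F (n+1) := by
      rw [hrec n, le_div_iff₀ hd]
      nlinarith [mul_pos (mul_pos (by linarith : (0:ℝ) < 1 - 2*(F n)^2)
        (by linarith : (0:ℝ) < F n - 1/2)) (by linarith : (0:ℝ) < F n)]
    have hge : F 0 ≤ F n := by
      have hpow : (1:ℝ) ≤ (F 0 + 1/2)^n := one_le_pow₀ (by linarith)
      nlinarith [mul_le_mul_of_nonneg_right hpow (by linarith : (0:ℝ) ≤ F 0)]
    calc (F 0 + 1/2)^(n+1) * F 0 = (F 0 + 1/2) * ((F 0 + 1/2)^n * F 0) := by ring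
      _ ≤ (F n + 1/2) * F n := by
          apply mul_le_mul (by linarith) hIH (mul_nonneg (pow_nonneg (by linarith) n) (by linarith)) (by linarith)
      _ ≤ F (n+1) := hkey
end

section
/- Let F₀ be a real number with 1/2 < F₀ < 1/√2 and define the purification fidelity sequence by F_n = F_{n-1}² / (F_{n-1}² + (1 - F_{n-1})²) for n ≥ 1. Then for the natural number n = ⌈(-log₂(F₀·√2)) / log₂(F₀ + 1/2)⌉ one has F_n ≥ 1/√2. In other words, at most ⌈(-log₂(F₀·√2)) / log₂(F₀ + 1/2)⌉ purification repetitions suffice to raise the fidelity to at least 1/√2. -/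
lemma purif_key (x : ℝ) (hx : 1 / 2 ≤ x) (hx2 : x ≤ 1 / Real.sqrt 2) :
    x * (x + 1 / 2) ≤ x ^ 2 / (x ^ 2 + (1 - x) ^ 2) := by
  have hd : 0 < x ^ 2 + (1 - x) ^ 2 := by nlinarith
  have hsq : x ^ 2 ≤ 1 / 2 := by
    have h2 : (0:ℝ) < Real.sqrt 2 := Real.sqrt_pos.mpr (by norm_num)
    have : (1 / Real.sqrt 2) ^ 2 = 1 / 2 := by
      rw [div_pow, Real.sq_sqrt (by norm_num : (2:ℝ) ≥ 0)]; norm_num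
    nlinarith
  rw [le_div_iff₀ hd]
  have h1 : 0 ≤ x * ((2*x-1) * (1/2 - x^2)) :=
    mul_nonneg (by linarith) (mul_nonneg (by linarith) (by linarith))
  nlinarith [h1]

lemma purif_mono (x : ℝ) (hx : 1 / 2 ≤ x) (hx1 : x ≤ 1) :
    x ≤ x ^ 2 / (x ^ 2 + (1 - x) ^ 2) := by
  have hd : 0 < x ^ 2 + (1 - x) ^ 2 := by nlinarith
  rw [le_div_iff₀ hd]
  have h1 : 0 ≤ x * (2*x-1) * (1-x) :=
    mul_nonneg (mul_nonneg (by linarith) (by linarith)) (by linarith)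
  nlinarith [h1]

/-- After `⌈(-log₂(F₀·√2)) / log₂(F₀ + 1/2)⌉` purification repetitions the
fidelity reaches at least `1/√2`. -/
theorem purification_reach_inv_sqrt_two (F : ℕ → ℝ)
    (h0 : 1 / 2 < F 0) (h1 : F 0 < 1 / Real.sqrt 2)
    (hrec : ∀ n : ℕ, F (n + 1) = (F n) ^ 2 / ((F n) ^ 2 + (1 - F n) ^ 2)) :
    F ⌈(-Real.logb 2 (F 0 * Real.sqrt 2)) / Real.logb 2 (F 0 + 1 / 2)⌉₊ ≥
      1 / Real.sqrt 2 := by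
  have hs2 : (0:ℝ) < Real.sqrt 2 := Real.sqrt_pos.mpr (by norm_num)
  have hsq : Real.sqrt 2 ^ 2 = 2 := Real.sq_sqrt (by norm_num)
  have hs1 : 1 < Real.sqrt 2 := by nlinarith
  have hinv1 : 1 / Real.sqrt 2 < 1 := by
    rw [div_lt_one hs2]; exact hs1
  set c : ℝ := F 0 + 1 / 2 with hc
  have hc1 : 1 < c := by simp only [hc]; linarith
  have hF0pos : 0 < F 0 := by linarith
  -- invariant
  have inv : ∀ n : ℕ, 1 / 2 < F n ∧ F n ≤ 1 ∧
      (1 / Real.sqrt 2 ≤ F n ∨ F 0 * c ^ n ≤ F n) := by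
    intro n
    induction n with
    | zero => exact ⟨h0, by linarith, Or.inr (by simp)⟩
    | succ n ih =>
      obtain ⟨ha, hb, hor⟩ := ih
      have hd : 0 < (F n) ^ 2 + (1 - F n) ^ 2 := by nlinarith
      have hhalf : 1 / 2 < F (n + 1) := by
        rw [hrec n, lt_div_iff₀ hd]; nlinarith
      have hone : F (n + 1) ≤ 1 := by
        rw [hrec n, div_le_one hd]; nlinarith
      have hmono : F n ≤ F (n + 1) := by
        rw [hrec n]; exact purif_mono _ ha.le hb
      refine ⟨hhalf, hone, ?_⟩
      rcases le_or_gt (1 / Real.sqrt 2) (F n) with h | h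
      · exact Or.inl (h.trans hmono)
      · rcases hor with h' | h'
        · exact absurd h' (not_le.mpr h)
        · right
          have hkey : F n * (F n + 1 / 2) ≤ F (n + 1) := by
            rw [hrec n]; exact purif_key _ ha.le h.le
          have hFn0 : F 0 ≤ F n := by
            calc F 0 = F 0 * 1 := by ring
            _ ≤ F 0 * c ^ n := by
                apply mul_le_mul_of_nonneg_left (one_le_pow₀ hc1.le) hF0pos.le
            _ ≤ F n := h'
          calc F 0 * c ^ (n + 1) = (F 0 * c ^ n) * c := by ring
            _ ≤ F n * c := mul_le_mul_of_nonneg_right h' (by linarith)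
            _ ≤ F n * (F n + 1 / 2) := by
                apply mul_le_mul_of_nonneg_left (by simp only [hc] at *; linarith) (by linarith)
            _ ≤ F (n + 1) := hkey
  set N := ⌈(-Real.logb 2 (F 0 * Real.sqrt 2)) / Real.logb 2 c⌉₊ with hN
  obtain ⟨_, _, hor⟩ := inv N
  rcases hor with h | h
  · exact h
  · -- show F 0 * c ^ N ≥ 1 / √2
    have hlogc : 0 < Real.logb 2 c := Real.logb_pos (by norm_num) hc1
    have hle : (-Real.logb 2 (F 0 * Real.sqrt 2)) / Real.logb 2 c ≤ (N : ℝ) :=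
      Nat.le_ceil _
    have hle2 : -Real.logb 2 (F 0 * Real.sqrt 2) ≤ (N : ℝ) * Real.logb 2 c := by
      rw [div_le_iff₀ hlogc] at hle; linarith
    have hprod : 0 < F 0 * Real.sqrt 2 := mul_pos hF0pos hs2
    have hlogb : Real.logb 2 ((F 0 * Real.sqrt 2)⁻¹) ≤ Real.logb 2 (c ^ N) := by
      rw [Real.logb_inv, Real.logb_pow]; exact hle2
    have hineq : (F 0 * Real.sqrt 2)⁻¹ ≤ c ^ N :=
      (Real.logb_le_logb (by norm_num) (inv_pos.mpr hprod)
        (pow_pos (by linarith) N)).mp hlogb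
    have hcN : 1 / Real.sqrt 2 ≤ F 0 * c ^ N := by
      rw [inv_eq_one_div, div_le_iff₀ hprod] at hineq
      rw [div_le_iff₀ hs2]
      nlinarith
    exact le_trans hcN h
end

section
/- Let F₀ be a real number with F₀ ≥ 2/3 (and F₀ ≤ 1), let 0 < ε < 1/2, and define the purification fidelity sequence by F_n = F_{n-1}² / (F_{n-1}² + (1 - F_{n-1})²) for n ≥ 1. Then for every natural number m with m ≥ log₂(log₂(1/ε)) one has F_m > 1 - ε. -/
/-!
The purification map squares the odds ratio `(1 - F) / F` of infidelity to fidelity. Starting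
from `F₀ ≥ 2/3` this ratio is at most `1/2`, so after `m` rounds it is at most `(1/2)^(2^m)`,
which the hypothesis on `m` makes at most `ε`. Finally `1 - F = odds F · F ≤ ε F` rearranges to
`1 - F ≤ ε / (1 + ε) < ε`.
-/

namespace Purification

noncomputable section

def purify (F : ℝ) : ℝ := F ^ 2 / (F ^ 2 + (1 - F) ^ 2)

def odds (F : ℝ) : ℝ := (1 - F) / F

lemma purify_pos {F : ℝ} (hF : 0 < F) : 0 < purify F := by
  unfold purify
  positivity

lemma odds_purify {F : ℝ} (hF : F ≠ 0) : odds (purify F) = odds F ^ 2 := by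
  have hD : F ^ 2 + (1 - F) ^ 2 ≠ 0 := by positivity
  unfold odds purify
  field_simp
  ring

lemma odds_le_half {F : ℝ} (hF : 2 / 3 ≤ F) : odds F ≤ 1 / 2 := by
  rw [odds, div_le_iff₀ (by linarith)]
  linarith

lemma odds_nonneg {F : ℝ} (hF0 : 0 < F) (hF1 : F ≤ 1) : 0 ≤ odds F :=
  div_nonneg (by linarith) hF0.le

lemma one_sub_lt_of_odds_le {F ε : ℝ} (hF : 0 < F) (hε : 0 < ε) (hodds : odds F ≤ ε) :
    1 - F < ε := by
  have h : 1 - F ≤ ε * F := by rwa [odds, div_le_iff₀ hF] at hodds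
  nlinarith

section Sequence

variable {F : ℕ → ℝ} (hrec : ∀ n, F (n + 1) = purify (F n))
include hrec

lemma pos_of_rec (h0 : 0 < F 0) (n : ℕ) : 0 < F n := by
  induction n with
  | zero => exact h0
  | succ n ih => rw [hrec]; exact purify_pos ih

lemma odds_eq_pow_of_rec (h0 : 0 < F 0) (n : ℕ) : odds (F n) = odds (F 0) ^ 2 ^ n := by
  induction n with
  | zero => simp
  | succ n ih =>
    rw [hrec, odds_purify (pos_of_rec hrec h0 n).ne', ih, ← pow_mul, ← pow_succ]

end Sequence

end

lemma half_pow_two_pow_le {ε : ℝ} (hε0 : 0 < ε) (hε1 : ε < 1) {m : ℕ}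
    (hm : Real.logb 2 (Real.logb 2 (1 / ε)) ≤ m) : (1 / 2 : ℝ) ^ 2 ^ m ≤ ε := by
  have hL : 0 < Real.logb 2 (1 / ε) :=
    Real.logb_pos one_lt_two ((one_lt_div hε0).2 hε1)
  have hlog : Real.logb 2 (1 / ε) ≤ ((2 ^ m : ℕ) : ℝ) := by
    rwa [Real.logb_le_iff_le_rpow one_lt_two hL, Real.rpow_natCast, ← Nat.cast_ofNat,
      ← Nat.cast_pow] at hm
  rw [Real.logb_le_iff_le_rpow one_lt_two (by positivity), Real.rpow_natCast] at hlog
  rw [div_pow, one_pow, div_le_iff₀ (by positivity)]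
  rwa [div_le_iff₀ hε0, mul_comm] at hlog

end Purification

open Purification in
/-- If the initial fidelity is at least `2/3`, then after any
`m ≥ log₂ log₂ (1/ε)` purification repetitions the fidelity exceeds `1 - ε`. -/
theorem purification_accuracy (F : ℕ → ℝ) (ε : ℝ)
    (h0 : 2 / 3 ≤ F 0) (h1 : F 0 ≤ 1)
    (hε0 : 0 < ε) (hε1 : ε < 1 / 2)
    (hrec : ∀ n : ℕ, F (n + 1) = (F n) ^ 2 / ((F n) ^ 2 + (1 - F n) ^ 2)) :
    ∀ m : ℕ, (m : ℝ) ≥ Real.logb 2 (Real.logb 2 (1 / ε)) → F m > 1 - ε := by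
  intro m hm
  have hF0 : 0 < F 0 := by linarith
  have hodds : odds (F m) ≤ ε :=
    calc odds (F m) = odds (F 0) ^ 2 ^ m := odds_eq_pow_of_rec hrec hF0 m
      _ ≤ (1 / 2) ^ 2 ^ m := pow_le_pow_left₀ (odds_nonneg hF0 h1) (odds_le_half h0) _
      _ ≤ ε := half_pow_two_pow_le hε0 (by linarith) hm
  have := one_sub_lt_of_odds_le (pos_of_rec hrec hF0 m) hε0 hodds
  linarith
end

section
/- Let F₀ be a real number with 0 < F₀ ≤ 1 and define the concatenated error-correction fidelity sequence by F_n = F_{n-1}·√(3 - 2·F_{n-1}) for n ≥ 1. Then F_n tends to 1 as n tends to infinity. -/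
/-!
On `(0, 1]` the update `f` takes values in `(0, 1]` and satisfies `f x ≥ x`, so the sequence
increases and is bounded; by continuity its limit is a fixed point of `f`, and the only positive
fixed point is `1`.
-/

open Filter Set Function

/-- The fidelity update `x ↦ √(x³ + 3(1 - x)x²)` of the (3,1) repetition code. -/
noncomputable def fidelityMap (x : ℝ) : ℝ := x * √(3 - 2 * x)

lemma continuous_fidelityMap : Continuous fidelityMap := by
  unfold fidelityMap
  fun_prop

lemma fidelityMap_mem_Ioc {x : ℝ} (hx : x ∈ Ioc 0 1) : fidelityMap x ∈ Ioc 0 1 := by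
  obtain ⟨hpos, hle⟩ := hx
  refine ⟨mul_pos hpos (Real.sqrt_pos.2 (by linarith)), ?_⟩
  -- `x √(3 - 2x) = √(x²(3 - 2x))` and `1 - x²(3 - 2x) = (1 - x)²(1 + 2x)`
  calc fidelityMap x = √(x ^ 2 * (3 - 2 * x)) := by
        rw [fidelityMap, Real.sqrt_mul (sq_nonneg x), Real.sqrt_sq hpos.le]
    _ ≤ √1 := Real.sqrt_le_sqrt (by nlinarith [sq_nonneg (x - 1)])
    _ = 1 := Real.sqrt_one

lemma le_fidelityMap {x : ℝ} (h0 : 0 ≤ x) (h1 : x ≤ 1) : x ≤ fidelityMap x := by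
  have : 1 ≤ √(3 - 2 * x) := Real.one_le_sqrt.2 (by linarith)
  unfold fidelityMap
  nlinarith

lemma fidelityMap_eq_self_iff {x : ℝ} (hx : x ≠ 0) : fidelityMap x = x ↔ x = 1 := by
  calc fidelityMap x = x ↔ √(3 - 2 * x) = 1 := by
        rw [fidelityMap, mul_eq_left₀ hx]
    _ ↔ x = 1 := by
        rw [Real.sqrt_eq_one]
        constructor <;> intro h <;> linarith

lemma tendsto_iterate_fidelityMap {x : ℝ} (hx : x ∈ Ioc 0 1) :
    Tendsto (fun n => fidelityMap^[n] x) atTop (nhds 1) := by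
  have hmem : ∀ n, fidelityMap^[n] x ∈ Ioc 0 1 := fun n =>
    (MapsTo.iterate (fun _ => fidelityMap_mem_Ioc) n) hx
  have hmono : Monotone fun n => fidelityMap^[n] x := monotone_nat_of_le_succ fun n => by
    rw [iterate_succ_apply']
    exact le_fidelityMap (hmem n).1.le (hmem n).2
  obtain ⟨L, hL⟩ : ∃ L, Tendsto (fun n => fidelityMap^[n] x) atTop (nhds L) :=
    ⟨_, tendsto_atTop_ciSup hmono ⟨1, by rintro _ ⟨n, rfl⟩; exact (hmem n).2⟩⟩
  have hL_pos : 0 < L := hx.1.trans_le (hmono.ge_of_tendsto hL 0)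
  have hL_fixed : fidelityMap L = L :=
    isFixedPt_of_tendsto_iterate hL continuous_fidelityMap.continuousAt
  rwa [(fidelityMap_eq_self_iff hL_pos.ne').1 hL_fixed] at hL

/-- The concatenated error-correction fidelity sequence tends to `1`. -/
theorem concatenated_ec_tendsto_one (F : ℕ → ℝ)
    (h0 : 0 < F 0) (h1 : F 0 ≤ 1)
    (hrec : ∀ n : ℕ, F (n + 1) = F n * Real.sqrt (3 - 2 * F n)) :
    Tendsto F atTop (nhds 1) := by
  have hF : F = fun n => fidelityMap^[n] (F 0) := by
    funext n
    induction n with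
    | zero => rfl
    | succ n ih => rw [hrec, iterate_succ_apply', ← ih, fidelityMap]
  rw [hF]
  exact tendsto_iterate_fidelityMap ⟨h0, h1⟩
end
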